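/- arXiv:2002.11706 — 3 statements merged into one kernel-verified Lean document; each statement's English description precedes it below -/
import Mathlib

section
/- Let n ≥ 1 and let A(t) = (a_{ij}(t)) be an n×n real matrix whose entries a_{ij} : [0,∞) → ℝ are continuous and satisfy a_{ij}(t) ≥ 0 for all t ∈ (0,∞) whenever i ≠ j. Let u₀ ∈ ℝⁿ satisfy u₀ⁱ ≥ 0 for all i, and let u solve u'(t) = A(t)u(t), u(0) = u₀. Then for every i = 1,…,n and every t ∈ (0,∞), uⁱ(t) ≥ u₀ⁱ · exp(∫₀ᵗ a_{ii}(s) ds). -/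
open Set Matrix Filter Topology Real

/-!
Nonnegative off-diagonal coefficients keep the positive cone invariant. Let `C` bound the row
sums of `A` on `[0, T]`. For the perturbed vector `u t + ε e^{(C+1)(t-T)} 𝟙`, a component that
reaches `0` while the others are nonnegative has strictly positive derivative there, so real
induction on `[0, T]` keeps the perturbed vector nonnegative, and `ε → 0` gives `u ≥ 0`.
Then `(uⁱ)' ≥ aᵢᵢ uⁱ`, so `uⁱ(t) exp(-∫₀ᵗ aᵢᵢ)` is nondecreasing.
-/

theorem Matrix.diag_mul_le_mulVec_apply {ι R : Type*} [Fintype ι] [Semiring R] [PartialOrder R]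
    [IsOrderedRing R] {M : Matrix ι ι R} {x : ι → R} {i : ι} (hM : ∀ j, j ≠ i → 0 ≤ M i j)
    (hx : 0 ≤ x) : M i i * x i ≤ (M *ᵥ x) i := by
  classical
  rw [mulVec, dotProduct, ← Finset.add_sum_erase _ _ (Finset.mem_univ i)]
  exact le_add_of_nonneg_right <| Finset.sum_nonneg fun j hj =>
    mul_nonneg (hM j (Finset.ne_of_mem_erase hj)) (hx j)

theorem HasDerivWithinAt.eventually_nonneg_nhdsGT {f : ℝ → ℝ} {f' x : ℝ}
    (hf : HasDerivWithinAt f f' (Ici x) x) (hx : 0 ≤ f x) (hf' : f x = 0 → 0 < f') :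
    ∀ᶠ y in 𝓝[>] x, 0 ≤ f y := by
  rcases hx.eq_or_lt with hzero | hpos
  · have hslope := (hasDerivWithinAt_iff_tendsto_slope' (lt_irrefl x)).1 hf.Ioi_of_Ici
    filter_upwards [hslope.eventually (eventually_gt_nhds (hf' hzero.symm)),
      self_mem_nhdsWithin] with y hy hxy
    exact (pos_of_slope_pos hxy hy hzero.symm).le
  · filter_upwards [(hf.continuousWithinAt.mono Ioi_subset_Ici_self).eventually
      (eventually_gt_nhds hpos)] with y hy
    exact hy.le

theorem mul_exp_integral_le_of_mul_le_deriv {v v' a : ℝ → ℝ} {t₀ t : ℝ} (ht : t₀ ≤ t)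
    (hv : ContinuousOn v (Icc t₀ t)) (hv' : ∀ s ∈ Ioo t₀ t, HasDerivAt v (v' s) s)
    (ha : ContinuousOn a (Icc t₀ t)) (hle : ∀ s ∈ Ioo t₀ t, a s * v s ≤ v' s) :
    v t₀ * exp (∫ s in t₀..t, a s) ≤ v t := by
  set φ : ℝ → ℝ := fun s => ∫ r in t₀..s, a r
  have hφc : ContinuousOn φ (Icc t₀ t) := by
    have := intervalIntegral.continuousOn_primitive_interval'
      (ha.intervalIntegrable_of_Icc (μ := MeasureTheory.volume) ht) (left_mem_uIcc (b := t))
    rwa [uIcc_of_le ht] at this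
  have hφ : ∀ s ∈ Ioo t₀ t, HasDerivAt φ (a s) s := fun s hs =>
    intervalIntegral.integral_hasDerivAt_right
      ((ha.mono (Icc_subset_Icc_right hs.2.le)).intervalIntegrable_of_Icc hs.1.le)
      ((ha.mono Ioo_subset_Icc_self).stronglyMeasurableAtFilter isOpen_Ioo s hs)
      (ha.continuousAt (Icc_mem_nhds hs.1 hs.2))
  have hmono : MonotoneOn (fun s => v s * exp (-φ s)) (Icc t₀ t) := by
    refine monotoneOn_of_hasDerivWithinAt_nonneg (convex_Icc _ _) (hv.mul hφc.neg.rexp)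
      (f' := fun s => v' s * exp (-φ s) + v s * (exp (-φ s) * -a s)) ?_ ?_
    · intro s hs
      rw [interior_Icc] at hs
      exact ((hv' s hs).mul (hφ s hs).neg.exp).hasDerivWithinAt
    · intro s hs
      rw [interior_Icc] at hs
      have := mul_le_mul_of_nonneg_right (hle s hs) (exp_pos (-φ s)).le
      linarith
  have hle_t := hmono (left_mem_Icc.2 ht) (right_mem_Icc.2 ht) ht
  simp only [φ, intervalIntegral.integral_same, neg_zero, exp_zero, mul_one] at hle_t
  calc v t₀ * exp (φ t) ≤ v t * exp (-φ t) * exp (φ t) :=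
        mul_le_mul_of_nonneg_right hle_t (exp_pos _).le
    _ = v t := by rw [mul_assoc, ← exp_add, neg_add_cancel, exp_zero, mul_one]

section CooperativeSystem

variable {ι : Type*} [Fintype ι] {A : ℝ → Matrix ι ι ℝ} {u : ℝ → ι → ℝ}

theorem nonneg_add_exp_smul_one_of_hasDerivWithinAt_mulVec
    (hpos : ∀ i j, i ≠ j → ∀ t ∈ Ioi (0 : ℝ), 0 ≤ A t i j) (hu0 : 0 ≤ u 0)
    (hu : ∀ t ∈ Ici (0 : ℝ), HasDerivWithinAt u (A t *ᵥ u t) (Ici 0) t) {T C ε : ℝ}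
    (hC : ∀ t ∈ Icc 0 T, ∀ i, (A t *ᵥ 1) i ≤ C) (hε : 0 < ε) :
    ∀ t ∈ Icc 0 T, 0 ≤ u t + (ε * exp ((C + 1) * (t - T))) • (1 : ι → ℝ) := by
  set δ : ℝ → ℝ := fun t => ε * exp ((C + 1) * (t - T))
  have hδ : ∀ t, HasDerivAt δ ((C + 1) * δ t) t := by
    intro t
    have := (((hasDerivAt_id' t).sub_const T).const_mul (C + 1)).exp.const_mul ε
    exact this.congr_deriv (by simp only [δ]; ring)
  set g : ℝ → ι → ℝ := fun t => u t + δ t • 1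
  have hg : ∀ t ∈ Ici (0 : ℝ),
      HasDerivWithinAt g (A t *ᵥ u t + ((C + 1) * δ t) • 1) (Ici 0) t := fun t ht =>
    (hu t ht).add ((hδ t).hasDerivWithinAt.smul_const 1)
  refine IsClosed.Icc_subset_of_forall_mem_nhdsWithin (s := {t | 0 ≤ g t}) ?_ ?_ ?_
  · rw [inter_comm]
    exact ContinuousOn.preimage_isClosed_of_isClosed
      (fun t ht => (hg t ht.1).continuousWithinAt.mono Icc_subset_Ici_self) isClosed_Icc
      isClosed_Ici
  · exact add_nonneg hu0 (smul_nonneg (by positivity) zero_le_one)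
  · rintro x ⟨hgx, hx0, hxT⟩
    refine eventually_all.2 fun j => HasDerivWithinAt.eventually_nonneg_nhdsGT
      ((hasDerivWithinAt_pi.1 (hg x hx0) j).mono (Ici_subset_Ici.2 hx0)) (hgx j) fun hgj => ?_
    have hδx : 0 < δ x := by positivity
    have hx : 0 < x := by
      refine hx0.lt_of_ne fun h => ?_
      subst h
      have : 0 < g 0 j := by simpa [g] using add_pos_of_nonneg_of_pos (hu0 j) hδx
      linarith
    have hAg : 0 ≤ (A x *ᵥ g x) j := by
      simpa [hgj] using Matrix.diag_mul_le_mulVec_apply (fun k hk => hpos j k hk.symm x hx) hgx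
    have hsplit : (A x *ᵥ g x) j = (A x *ᵥ u x) j + δ x * (A x *ᵥ 1) j := by
      simp [g, mulVec_add, mulVec_smul]
    have := mul_le_mul_of_nonneg_left (hC x ⟨hx0, hxT.le⟩ j) hδx.le
    simp only [Pi.add_apply, Pi.smul_apply, smul_eq_mul, Pi.one_apply, mul_one]
    linarith

theorem nonneg_of_hasDerivWithinAt_mulVec (hA : ∀ i j, ContinuousOn (fun t => A t i j) (Ici 0))
    (hpos : ∀ i j, i ≠ j → ∀ t ∈ Ioi (0 : ℝ), 0 ≤ A t i j) (hu0 : 0 ≤ u 0)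
    (hu : ∀ t ∈ Ici (0 : ℝ), HasDerivWithinAt u (A t *ᵥ u t) (Ici 0) t) :
    ∀ t ∈ Ici (0 : ℝ), 0 ≤ u t := by
  intro T hT j
  have hrowsum : ContinuousOn (fun t => A t *ᵥ 1) (Icc 0 T) := continuousOn_pi.2 fun i => by
    simp only [mulVec, dotProduct, Pi.one_apply, mul_one]
    exact continuousOn_finsetSum _ fun k _ => (hA i k).mono Icc_subset_Ici_self
  obtain ⟨C, hC⟩ := isCompact_Icc.exists_bound_of_continuousOn hrowsum
  have hCrow : ∀ t ∈ Icc 0 T, ∀ i, (A t *ᵥ 1) i ≤ C := fun t ht i =>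
    (le_abs_self _).trans ((norm_le_pi_norm _ i).trans (hC t ht))
  refine le_of_forall_pos_le_add fun ε hε => ?_
  simpa using nonneg_add_exp_smul_one_of_hasDerivWithinAt_mulVec hpos hu0 hu hCrow hε T
    ⟨hT, le_rfl⟩ j

end CooperativeSystem

theorem wazewski_lower_bound_general {n : ℕ} (A : ℝ → Matrix (Fin n) (Fin n) ℝ)
    (hA : ∀ i j, ContinuousOn (fun t => A t i j) (Ici (0 : ℝ)))
    (hpos : ∀ i j, i ≠ j → ∀ t ∈ Ioi (0 : ℝ), 0 ≤ A t i j)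
    (u₀ : Fin n → ℝ) (hu₀ : ∀ i, 0 ≤ u₀ i)
    (u : ℝ → Fin n → ℝ) (hu0 : u 0 = u₀)
    (hu : ∀ t ∈ Ici (0 : ℝ), HasDerivWithinAt u (A t *ᵥ u t) (Ici (0 : ℝ)) t) :
    ∀ t ∈ Ioi (0 : ℝ), ∀ i, u₀ i * Real.exp (∫ s in (0 : ℝ)..t, A s i i) ≤ u t i := by
  intro t ht i
  subst hu0
  have hnonneg := nonneg_of_hasDerivWithinAt_mulVec hA hpos hu₀ hu
  have hui : ∀ s ∈ Ici (0 : ℝ), HasDerivWithinAt (fun r => u r i) ((A s *ᵥ u s) i) (Ici 0) s :=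
    fun s hs => hasDerivWithinAt_pi.1 (hu s hs) i
  exact mul_exp_integral_le_of_mul_le_deriv ht.le
    (fun s hs => (hui s hs.1).continuousWithinAt.mono Icc_subset_Ici_self)
    (fun s hs => (hui s hs.1.le).hasDerivAt (Ici_mem_nhds hs.1))
    ((hA i i).mono Icc_subset_Ici_self)
    (fun s hs => Matrix.diag_mul_le_mulVec_apply (fun j hj => hpos i j hj.symm s hs.1)
      (hnonneg s hs.1.le))

/-- Lower bound for components of solutions of a linear ODE `u' = A t * u` on `[0,∞)`
with continuous coefficients and nonnegative off-diagonal entries: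
`uⁱ(t) ≥ u₀ⁱ · exp(∫₀ᵗ a_{ii}(s) ds)`. -/
theorem wazewski_lower_bound {n : ℕ} (hn : 1 ≤ n) (A : ℝ → Matrix (Fin n) (Fin n) ℝ)
    (hA : ∀ i j, ContinuousOn (fun t => A t i j) (Ici (0 : ℝ)))
    (hpos : ∀ i j, i ≠ j → ∀ t ∈ Ioi (0 : ℝ), 0 ≤ A t i j)
    (u₀ : Fin n → ℝ) (hu₀ : ∀ i, 0 ≤ u₀ i)
    (u : ℝ → Fin n → ℝ) (hu0 : u 0 = u₀)
    (hu : ∀ t ∈ Ici (0 : ℝ), HasDerivWithinAt u (A t *ᵥ u t) (Ici (0 : ℝ)) t) :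
    ∀ t ∈ Ioi (0 : ℝ), ∀ i, u₀ i * Real.exp (∫ s in (0 : ℝ)..t, A s i i) ≤ u t i :=
  wazewski_lower_bound_general A hA hpos u₀ hu₀ u hu0 hu
end

section
/- Let T ≥ 1 and let t satisfy 0 < t < T − e^{−T/2}. Let Z be a real random variable whose law is the Gaussian measure on ℝ with mean 0 and variance t, and set W = e^{−T/2}(e^{−T/2} − (T − t) e^{t/2} cos Z). Then ℙ(W > 0) > 0 and ℙ(W < 0) > 0, and the expectation satisfies 𝔼[W] = e^{−T/2}(e^{−T/2} − (T − t)) < 0. -/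
/-!
Write `W = g ∘ Z` with `g x = a (a - K cos x)`, `a = e^{-T/2}` and `K = (T - t) e^{t/2} > a`.
Then `g π > 0 > g 0`, and a nondegenerate Gaussian law charges every nonempty open set, so both
signs occur with positive probability. The mean comes from `𝔼[cos Z] = Re 𝔼[e^{iZ}] = e^{-t/2}`,
the real part of the Gaussian characteristic function at `1`.
-/

open MeasureTheory ProbabilityTheory Real NNReal

lemma integral_cos_gaussianReal (μ : ℝ) (v : ℝ≥0) :
    ∫ x, cos x ∂gaussianReal μ v = cos μ * exp (-(v : ℝ) / 2) := by
  have hint : Integrable (fun x : ℝ => Complex.exp (x * Complex.I)) (gaussianReal μ v) :=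
    (integrable_const (1 : ℝ)).mono' (by fun_prop) (ae_of_all _ fun x => by
      simp [Complex.norm_exp_ofReal_mul_I])
  have h := congrArg Complex.re (charFun_gaussianReal (μ := μ) (v := v) 1)
  simp only [charFun_apply_real, Complex.ofReal_one, one_mul] at h
  rw [← RCLike.re_eq_complex_re, ← integral_re hint] at h
  simpa [Complex.exp_re, ← Complex.ofReal_pow, mul_comm, neg_div] using h

lemma integral_const_sub_mul_cos_gaussianReal (a K μ : ℝ) (v : ℝ≥0) :
    ∫ x, (a - K * cos x) ∂gaussianReal μ v = a - K * (cos μ * exp (-(v : ℝ) / 2)) := by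
  have hcos : Integrable cos (gaussianReal μ v) :=
    (integrable_const (1 : ℝ)).mono' (by fun_prop) (ae_of_all _ fun x => abs_cos_le_one x)
  rw [integral_sub (integrable_const a) (hcos.const_mul K), integral_const_mul,
    integral_cos_gaussianReal, integral_const, probReal_univ, one_smul]

lemma isOpenPosMeasure_gaussianReal (μ : ℝ) {v : ℝ≥0} (hv : v ≠ 0) :
    (gaussianReal μ v).IsOpenPosMeasure :=
  (gaussianReal_absolutelyContinuous' μ hv).isOpenPosMeasure

lemma measure_preimage_pos_of_isOpen {Ω X : Type*} [MeasurableSpace Ω] [TopologicalSpace X]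
    [MeasurableSpace X] [OpensMeasurableSpace X] {P : Measure Ω} {Z : Ω → X} (hZ : Measurable Z)
    [(P.map Z).IsOpenPosMeasure] {S : Set X} (hS : IsOpen S) (hne : S.Nonempty) :
    0 < P (Z ⁻¹' S) := by
  rw [← Measure.map_apply hZ hS.measurableSet]
  exact hS.measure_pos _ hne

theorem malliavin_derivative_sign_change_general {Ω : Type*} {mΩ : MeasurableSpace Ω}
    {P : Measure Ω} [IsProbabilityMeasure P]
    (T t : ℝ) (ht : 0 < t) (htT : t < T - Real.exp (-T / 2))
    (Z : Ω → ℝ) (hZ : Measurable Z)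
    (hlaw : Measure.map Z P = gaussianReal 0 t.toNNReal)
    (W : Ω → ℝ)
    (hW : ∀ ω, W ω = Real.exp (-T / 2) *
      (Real.exp (-T / 2) - (T - t) * Real.exp (t / 2) * Real.cos (Z ω))) :
    0 < P {ω | 0 < W ω} ∧ 0 < P {ω | W ω < 0} ∧
      ∫ ω, W ω ∂P = Real.exp (-T / 2) * (Real.exp (-T / 2) - (T - t)) ∧
      Real.exp (-T / 2) * (Real.exp (-T / 2) - (T - t)) < 0 := by
  set a := exp (-T / 2)
  set K := (T - t) * exp (t / 2)
  have ha : 0 < a := exp_pos _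
  have haK : a < K := by nlinarith [one_le_exp (show 0 ≤ t / 2 by positivity)]
  set g : ℝ → ℝ := fun x => a * (a - K * cos x) with hg
  obtain rfl : W = g ∘ Z := funext hW
  have hg_cont : Continuous g := by fun_prop
  have : (P.map Z).IsOpenPosMeasure := by
    rw [hlaw]; exact isOpenPosMeasure_gaussianReal 0 (by simpa using ht)
  refine ⟨?_, ?_, ?_, mul_neg_of_pos_of_neg ha (by linarith)⟩
  · refine measure_preimage_pos_of_isOpen hZ (isOpen_lt continuous_const hg_cont) ⟨π, ?_⟩
    simp only [Set.mem_ofPred_eq, hg, cos_pi]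
    nlinarith
  · refine measure_preimage_pos_of_isOpen hZ (isOpen_lt hg_cont continuous_const) ⟨0, ?_⟩
    simp only [Set.mem_ofPred_eq, hg, cos_zero]
    nlinarith
  · have hexp : exp (t / 2) * exp (-t / 2) = 1 := by
      rw [← exp_add, neg_div, add_neg_cancel, exp_zero]
    change ∫ ω, g (Z ω) ∂P = _
    rw [← integral_map hZ.aemeasurable hg_cont.aestronglyMeasurable, hlaw, hg,
      integral_const_mul, integral_const_sub_mul_cos_gaussianReal, cos_zero, one_mul,
      Real.coe_toNNReal _ ht.le]
    linear_combination (-(a * (T - t))) * hexp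

/-- For `T ≥ 1` and `0 < t < T − e^{−T/2}`, the random variable
`W = e^{−T/2}(e^{−T/2} − (T−t)e^{t/2} cos Z)`, with `Z` centered Gaussian of variance `t`,
takes both positive and negative values with positive probability, and has negative mean
`e^{−T/2}(e^{−T/2} − (T−t))`. -/
theorem malliavin_derivative_sign_change {Ω : Type*} {mΩ : MeasurableSpace Ω}
    {P : Measure Ω} [IsProbabilityMeasure P]
    (T t : ℝ) (hT : 1 ≤ T) (ht : 0 < t) (htT : t < T - Real.exp (-T / 2))
    (Z : Ω → ℝ) (hZ : Measurable Z)
    (hlaw : Measure.map Z P = gaussianReal 0 t.toNNReal)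
    (W : Ω → ℝ)
    (hW : ∀ ω, W ω = Real.exp (-T / 2) *
      (Real.exp (-T / 2) - (T - t) * Real.exp (t / 2) * Real.cos (Z ω))) :
    0 < P {ω | 0 < W ω} ∧ 0 < P {ω | W ω < 0} ∧
      ∫ ω, W ω ∂P = Real.exp (-T / 2) * (Real.exp (-T / 2) - (T - t)) ∧
      Real.exp (-T / 2) * (Real.exp (-T / 2) - (T - t)) < 0 :=
  malliavin_derivative_sign_change_general (mΩ := mΩ) T t ht htT Z hZ hlaw W hW
end

section
/- Let α ∈ ℝ, β > 0, τ > 0. Define g : ℝ → ℝ by g(x) = α + β(x − sin x), let ψ be its inverse function, let p_τ(x) = (2πτ)^{−1/2} e^{−x²/(2τ)}, and let ρ(y) = p_τ(ψ(y)) / (β(1 − cos ψ(y))) be the density of the law of g(Z) for Z Gaussian with mean 0 and variance τ. Then there do not exist constants C > 0 and Λ > 0 such that ρ(y) ≤ C e^{−y²/(2Λ)} for Lebesgue-almost every y ∈ ℝ; that is, for every C > 0 and Λ > 0, the set {y ∈ ℝ : ρ(y) > C e^{−y²/(2Λ)}} has positive Lebesgue measure. -/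
open MeasureTheory Real Filter Set Topology

/-!
`g` is a continuous bijection of `ℝ`, and `ρ ∘ g = p / (β (1 - cos))`, whose denominator tends
to `0⁺` at `0⁺` while `p 0 > 0`. Hence `ρ ∘ g > C` on some interval `(0, u]`, so `ρ > C` on its
image under `g`, an interval of positive length; there `C e^{-y²/(2Λ)} ≤ C < ρ y`.
-/

lemma tendsto_one_sub_cos_nhdsGT_zero :
    Tendsto (fun x : ℝ => 1 - cos x) (𝓝[>] 0) (𝓝[>] 0) := by
  rw [tendsto_nhdsWithin_iff]
  constructor
  · simpa using ((continuous_cos.tendsto 0).const_sub 1).mono_left nhdsWithin_le_nhds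
  · filter_upwards [Ioo_mem_nhdsGT pi_pos] with x hx
    have := cos_lt_cos_of_nonneg_of_le_pi le_rfl hx.2.le hx.1
    rw [cos_zero] at this
    exact sub_pos.2 this

lemma tendsto_div_mul_one_sub_cos_atTop {p : ℝ → ℝ} {c β : ℝ}
    (hp : Tendsto p (𝓝[>] 0) (𝓝 c)) (hc : 0 < c) (hβ : 0 < β) :
    Tendsto (fun x => p x / (β * (1 - cos x))) (𝓝[>] 0) atTop := by
  simp_rw [div_mul_eq_div_div _ β, div_eq_mul_inv (p _ / β)]
  exact (hp.div_const β).pos_mul_atTop (div_pos hc hβ)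
    tendsto_one_sub_cos_nhdsGT_zero.inv_tendsto_nhdsGT_zero

lemma volume_image_Icc_pos {g : ℝ → ℝ} (hg : Continuous g) (hinj : Function.Injective g)
    {a b : ℝ} (hab : a < b) : 0 < volume (g '' Icc a b) := by
  have hne : g a ≠ g b := hinj.ne hab.ne
  calc (0 : ENNReal) < volume (uIcc (g a) (g b)) := by
        rw [uIcc, Real.volume_Icc, ENNReal.ofReal_pos, sub_pos, min_lt_max]
        exact hne
    _ ≤ volume (g '' Icc a b) := by
        rw [← uIcc_of_le hab.le]
        exact measure_mono (intermediate_value_uIcc hg.continuousOn)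

lemma volume_lt_pos_of_tendsto_comp_atTop {g ρ b : ℝ → ℝ} {x₀ M : ℝ} (hg : Continuous g)
    (hinj : Function.Injective g) (hρ : Tendsto (ρ ∘ g) (𝓝[>] x₀) atTop) (hb : ∀ y, b y ≤ M) :
    0 < volume {y | b y < ρ y} := by
  obtain ⟨u, hu, hρu⟩ := mem_nhdsGT_iff_exists_Ioc_subset.1 (hρ.eventually_gt_atTop M)
  have hsub : g '' Icc ((x₀ + u) / 2) u ⊆ {y | b y < ρ y} := by
    rintro _ ⟨x, hx, rfl⟩
    have : x ∈ Ioc x₀ u := ⟨by linarith [hx.1, mem_Ioi.1 hu], hx.2⟩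
    exact (hb _).trans_lt (hρu this)
  exact (volume_image_Icc_pos hg hinj (by linarith [mem_Ioi.1 hu])).trans_le (measure_mono hsub)

theorem no_gaussian_upper_bound_general (α β τ : ℝ) (hβ : 0 < β) (hτ : 0 < τ)
    (g : ℝ → ℝ) (hg : ∀ x, g x = α + β * (x - Real.sin x))
    (ψ : ℝ → ℝ) (hψ₁ : Function.LeftInverse ψ g)
    (p : ℝ → ℝ) (hp : ∀ x, p x = (2 * Real.pi * τ) ^ (-(1:ℝ)/2) * Real.exp (-x ^ 2 / (2 * τ)))
    (ρ : ℝ → ℝ) (hρ : ∀ y, ρ y = p (ψ y) / (β * (1 - Real.cos (ψ y)))) :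
    ∀ C > (0 : ℝ), ∀ Λ > (0 : ℝ),
      0 < volume {y : ℝ | C * Real.exp (-y ^ 2 / (2 * Λ)) < ρ y} := by
  intro C hC Λ hΛ
  have hg_cont : Continuous g := by
    rw [funext hg]
    fun_prop
  have hp_cont : Continuous p := by
    rw [funext hp]
    fun_prop
  have hp0 : 0 < p 0 := by
    rw [hp]
    positivity
  have hρg : ρ ∘ g = fun x => p x / (β * (1 - cos x)) := by
    ext x
    simp only [Function.comp_apply, hρ, hψ₁ x]
  have hbound (y : ℝ) : C * exp (-y ^ 2 / (2 * Λ)) ≤ C :=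
    mul_le_of_le_one_right hC.le <| exp_le_one_iff.2 <|
      div_nonpos_of_nonpos_of_nonneg (neg_nonpos.2 (sq_nonneg y)) (by positivity)
  refine volume_lt_pos_of_tendsto_comp_atTop (x₀ := 0) hg_cont hψ₁.injective ?_ hbound
  rw [hρg]
  exact tendsto_div_mul_one_sub_cos_atTop hp_cont.continuousWithinAt.tendsto hp0 hβ

/-- The density `ρ(y) = p_τ(ψ(y)) / (β(1 − cos ψ(y)))` of the law of `g(Z)`,
where `g(x) = α + β(x − sin x)`, `ψ = g⁻¹` and `Z` is centered Gaussian of variance `τ`,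
admits no Gaussian-type upper bound: for all `C > 0` and `Λ > 0`, the set where
`ρ(y) > C e^{−y²/(2Λ)}` has positive Lebesgue measure. -/
theorem no_gaussian_upper_bound (α β τ : ℝ) (hβ : 0 < β) (hτ : 0 < τ)
    (g : ℝ → ℝ) (hg : ∀ x, g x = α + β * (x - Real.sin x))
    (ψ : ℝ → ℝ) (hψ₁ : Function.LeftInverse ψ g) (hψ₂ : Function.RightInverse ψ g)
    (p : ℝ → ℝ) (hp : ∀ x, p x = (2 * Real.pi * τ) ^ (-(1:ℝ)/2) * Real.exp (-x ^ 2 / (2 * τ)))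
    (ρ : ℝ → ℝ) (hρ : ∀ y, ρ y = p (ψ y) / (β * (1 - Real.cos (ψ y)))) :
    ∀ C > (0 : ℝ), ∀ Λ > (0 : ℝ),
      0 < volume {y : ℝ | C * Real.exp (-y ^ 2 / (2 * Λ)) < ρ y} :=
  no_gaussian_upper_bound_general α β τ hβ hτ g hg ψ hψ₁ p hp ρ hρ
end
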